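/- Let A be an m×n real matrix with AᵀA invertible and A† = (AᵀA)⁻¹Aᵀ, let φ : ℝᵐ → ℝᵐ be a differentiable bijection, let f : ℝⁿ → ℝⁿ, and let x : ℝ → ℝⁿ be differentiable with x′(t) = f(x(t)) for all t ≥ 0. Define the latent vector field g : ℝᵐ → ℝᵐ by g(w) = Dφ(φ⁻¹(w)) (A f(A† φ⁻¹(w))), and assume g is Lipschitz continuous with constant K. If w : ℝ → ℝᵐ is differentiable with w′(t) = g(w(t)) for all t ≥ 0 and w(0) = φ(A x(0)), then the reconstructed latent solution recovers the original trajectory: A† φ⁻¹(w(t)) = x(t) for all t ≥ 0. -/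

import Mathlib

open Matrix Function Set

/-!
Since `A† ∘ φ⁻¹` is a left inverse of the encoder `e = φ ∘ A`, the latent field is `e`-related to
`f`: `g (e z) = De(z) (f z)`. By the chain rule `e ∘ x` then solves the latent ODE with the same
initial value as `w`, so Lipschitz uniqueness gives `w = e ∘ x` on `[0, ∞)`, and decoding with
`A† ∘ φ⁻¹` recovers `x`.
-/

theorem Matrix.pinv_mulVec_mulVec {R m n : Type*} [CommRing R] [Fintype m] [Fintype n]
    [DecidableEq n] {A : Matrix m n R} (hA : IsUnit (Aᵀ * A)) (z : n → R) :
    ((Aᵀ * A)⁻¹ * Aᵀ) *ᵥ A *ᵥ z = z := by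
  rw [mulVec_mulVec, Matrix.mul_assoc, nonsing_inv_mul _ ((isUnit_iff_isUnit_det _).mp hA),
    one_mulVec]

theorem fderiv_comp_mulVec_apply {𝕜 m n F : Type*} [NontriviallyNormedField 𝕜] [CompleteSpace 𝕜]
    [Fintype m] [Fintype n] [NormedAddCommGroup F] [NormedSpace 𝕜 F] {A : Matrix m n 𝕜}
    {φ : (m → 𝕜) → F} {z : n → 𝕜} (hφ : DifferentiableAt 𝕜 φ (A *ᵥ z)) (v : n → 𝕜) :
    fderiv 𝕜 (fun z => φ (A *ᵥ z)) z v = fderiv 𝕜 φ (A *ᵥ z) (A *ᵥ v) := by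
  let L := (mulVecLin A).toContinuousLinearMap
  exact congrArg (· v) (hφ.hasFDerivAt.comp z L.hasFDerivAt).fderiv

theorem ODE_solution_unique_Ici {E : Type*} [NormedAddCommGroup E] [NormedSpace ℝ E]
    {v : E → E} {K : NNReal} (hv : LipschitzWith K v) {f g : ℝ → E} {a : ℝ}
    (hf : ∀ t ≥ a, HasDerivAt f (v (f t)) t) (hg : ∀ t ≥ a, HasDerivAt g (v (g t)) t)
    (ha : f a = g a) : EqOn f g (Ici a) := fun _ ht =>
  ODE_solution_unique (fun _ => hv)
    (fun s hs => (hf s hs.1).continuousAt.continuousWithinAt)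
    (fun s hs => (hf s hs.1).hasDerivWithinAt)
    (fun s hs => (hg s hs.1).continuousAt.continuousWithinAt)
    (fun s hs => (hg s hs.1).hasDerivWithinAt) ha ⟨ht, le_rfl⟩

/-- If the latent vector field g is K-Lipschitz and w solves the
latent ODE w′ = g(w) for t ≥ 0 with w(0) = φ(A x(0)), then the reconstructed
latent solution recovers the original trajectory: A† φ⁻¹(w(t)) = x(t) for all
t ≥ 0. -/
theorem latent_solution_reconstructs {n m : ℕ}
    (A : Matrix (Fin m) (Fin n) ℝ) (hA : IsUnit (Aᵀ * A))
    (φ : (Fin m → ℝ) → (Fin m → ℝ))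
    (hφ : Differentiable ℝ φ) (hbij : Function.Bijective φ)
    (f : (Fin n → ℝ) → (Fin n → ℝ))
    (x : ℝ → (Fin n → ℝ)) (hx : Differentiable ℝ x)
    (hode : ∀ t : ℝ, 0 ≤ t → deriv x t = f (x t))
    (g : (Fin m → ℝ) → (Fin m → ℝ))
    (hg : g = fun w : Fin m → ℝ =>
      fderiv ℝ φ (Function.invFun φ w)
        (A.mulVec (f (((Aᵀ * A)⁻¹ * Aᵀ).mulVec (Function.invFun φ w)))))
    (K : NNReal) (hK : LipschitzWith K g)
    (w : ℝ → (Fin m → ℝ)) (hw : Differentiable ℝ w)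
    (hwode : ∀ t : ℝ, 0 ≤ t → deriv w t = g (w t))
    (hw0 : w 0 = φ (A.mulVec (x 0))) :
    ∀ t : ℝ, 0 ≤ t →
      ((Aᵀ * A)⁻¹ * Aᵀ).mulVec (Function.invFun φ (w t)) = x t := by
  set e : (Fin n → ℝ) → (Fin m → ℝ) := fun z => φ (A *ᵥ z)
  have hinv : ∀ z, invFun φ (e z) = A *ᵥ z := fun z => leftInverse_invFun hbij.injective _
  have hdecode : ∀ z, ((Aᵀ * A)⁻¹ * Aᵀ) *ᵥ invFun φ (e z) = z := fun z => by
    rw [hinv, pinv_mulVec_mulVec hA]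
  have hrelated : ∀ z, g (e z) = fderiv ℝ e z (f z) := fun z => by
    rw [fderiv_comp_mulVec_apply (hφ _), hg]
    beta_reduce
    rw [hdecode, hinv]
  have he : Differentiable ℝ e := hφ.comp (mulVecLin A).toContinuousLinearMap.differentiable
  have he_sol : ∀ s ≥ 0, HasDerivAt (e ∘ x) (g ((e ∘ x) s)) s := fun s hs => by
    have hx_sol : HasDerivAt x (f (x s)) s := hode s hs ▸ (hx s).hasDerivAt
    rw [Function.comp_apply, hrelated]
    exact (he _).hasFDerivAt.comp_hasDerivAt s hx_sol
  have hw_sol : ∀ s ≥ 0, HasDerivAt w (g (w s)) s := fun s hs => hwode s hs ▸ (hw s).hasDerivAt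
  intro t ht
  rw [ODE_solution_unique_Ici hK hw_sol he_sol hw0 ht]
  exact hdecode (x t)
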